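/- arXiv:1709.08736 — 2 statements merged into one kernel-verified Lean document; each statement's English description precedes it below -/
import Mathlib

section
/- For integers h ≥ 1 and k, s ≥ 0, the q-binomial identity q^s · C_q(h-1, s) · C_q(h+k-s-1, h) + C_q(h-1, s-1) · C_q(h+k-s, h) = C_q(k, s) · C_q(h+k-s-1, h-s) holds, where C_q(n,k) denotes the Gaussian (q-)binomial coefficient. -/
/- Gaussian binomial coefficients as rational functions in the indeterminate `q`. -/

open Finset

/-- The indeterminate `q`, an element of the field of rational functions `ℚ(q)`. -/
noncomputable def q : RatFunc ℚ := RatFunc.X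

/-- The `q`-integer `[n]_q = 1 + q + ⋯ + q^{n-1}`. -/
noncomputable def qint (n : ℕ) : RatFunc ℚ := ∑ i ∈ Finset.range n, q ^ i

/-- The `q`-factorial `[n]_q!`. -/
noncomputable def qfact (n : ℕ) : RatFunc ℚ := ∏ i ∈ Finset.range n, qint (i + 1)

/-- The Gaussian binomial coefficient `C_q(n, k) = [n]_q!/([k]_q![n-k]_q!)`,
with the convention that it vanishes unless `0 ≤ k ≤ n`. -/
noncomputable def qbinom (n k : ℤ) : RatFunc ℚ :=
  if 0 ≤ k ∧ k ≤ n then qfact n.toNat / (qfact k.toNat * qfact (n - k).toNat) else 0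

/-!
Writing `h = a + b`, `k = a + c` and `s = a`, multiply both sides by `[a+b]_q [a+b+c]_q`.
The absorption identities `[m] C(m-1, j) = [m-j] C(m, j)` and `[m] C(m-1, j-1) = [j] C(m, j)`
remove every `-1` from the binomials, and the trinomial revision
`C(a+b, a) C(a+b+c, a+b) = C(a+c, a) C(a+b+c, b)` leaves the identity of `q`-integers
`q^a [b][c] + [a][a+b+c] = [a+c][a+b]`, which is a polynomial identity after clearing `q - 1`.
When `s > h` or `s > k`, all terms vanish.
-/

lemma qint_zero : qint 0 = 0 :=
  sum_range_zero _

lemma q_pow_sub_one_ne_zero {m : ℕ} (hm : m ≠ 0) : q ^ m - 1 ≠ 0 := by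
  have e : q ^ m - 1
      = algebraMap (Polynomial ℚ) (RatFunc ℚ) (Polynomial.X ^ m - Polynomial.C 1) := by
    simp [q, RatFunc.algebraMap_X]
  rw [e]
  exact RatFunc.algebraMap_ne_zero (Polynomial.X_pow_sub_C_ne_zero (Nat.pos_of_ne_zero hm) 1)

lemma q_sub_one_ne_zero : q - 1 ≠ 0 := by
  simpa using q_pow_sub_one_ne_zero one_ne_zero

lemma qint_eq_div (n : ℕ) : qint n = (q ^ n - 1) / (q - 1) := by
  rw [qint, eq_div_iff q_sub_one_ne_zero]
  exact geom_sum_mul q n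

lemma qint_ne_zero {n : ℕ} (hn : n ≠ 0) : qint n ≠ 0 := by
  rw [qint_eq_div]
  exact div_ne_zero (q_pow_sub_one_ne_zero hn) q_sub_one_ne_zero

lemma qfact_ne_zero (n : ℕ) : qfact n ≠ 0 :=
  prod_ne_zero_iff.mpr fun _ _ => qint_ne_zero (Nat.succ_ne_zero _)

lemma qfact_succ (n : ℕ) : qfact (n + 1) = qfact n * qint (n + 1) :=
  prod_range_succ _ n

lemma qbinom_natCast {n k : ℕ} (hkn : k ≤ n) :
    qbinom n k = qfact n / (qfact k * qfact (n - k)) := by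
  rw [qbinom, if_pos ⟨Int.natCast_nonneg k, Int.ofNat_le.mpr hkn⟩, ← Nat.cast_sub hkn]
  simp only [Int.toNat_natCast]

lemma qbinom_eq_zero_of_lt {n k : ℤ} (hnk : n < k) : qbinom n k = 0 :=
  if_neg fun h => (hnk.trans_le h.2).false

lemma qbinom_eq_zero_of_neg {n k : ℤ} (hk : k < 0) : qbinom n k = 0 :=
  if_neg fun h => (hk.trans_le h.1).false

lemma qint_mul_qbinom_sub_one (m j : ℕ) :
    qint m * qbinom ((m : ℤ) - 1) j = qint (m - j) * qbinom m j := by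
  rcases lt_or_ge j m with hjm | hmj
  · obtain ⟨n, rfl⟩ : ∃ n, m = n + 1 := ⟨m - 1, by omega⟩
    rw [show ((n + 1 : ℕ) : ℤ) - 1 = n by push_cast; ring, qbinom_natCast (by omega),
      qbinom_natCast hjm.le, show n + 1 - j = n - j + 1 by omega, qfact_succ, qfact_succ]
    have := qfact_ne_zero j
    have := qfact_ne_zero (n - j)
    have := qint_ne_zero (Nat.succ_ne_zero (n - j))
    field_simp
  · rw [qbinom_eq_zero_of_lt (by omega), Nat.sub_eq_zero_of_le hmj, qint_zero]
    ring

lemma qint_mul_qbinom_sub_one_sub_one (m j : ℕ) :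
    qint m * qbinom ((m : ℤ) - 1) ((j : ℤ) - 1) = qint j * qbinom m j := by
  rcases Nat.eq_zero_or_pos j with rfl | hj
  · rw [qbinom_eq_zero_of_neg (by omega), qint_zero]
    ring
  rcases le_or_gt j m with hjm | hmj
  · obtain ⟨n, rfl⟩ : ∃ n, m = n + 1 := ⟨m - 1, by omega⟩
    obtain ⟨i, rfl⟩ : ∃ i, j = i + 1 := ⟨j - 1, by omega⟩
    rw [show ((n + 1 : ℕ) : ℤ) - 1 = n by push_cast; ring,
      show ((i + 1 : ℕ) : ℤ) - 1 = i by push_cast; ring, qbinom_natCast (by omega),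
      qbinom_natCast hjm, Nat.add_sub_add_right, qfact_succ, qfact_succ]
    have := qfact_ne_zero i
    have := qfact_ne_zero (n - i)
    have := qint_ne_zero (Nat.succ_ne_zero i)
    field_simp
  · rw [qbinom_eq_zero_of_lt (by omega), qbinom_eq_zero_of_lt (by omega)]
    ring

lemma qbinom_mul_qbinom (a b c : ℕ) :
    qbinom ↑(a + b) a * qbinom ↑(a + b + c) ↑(a + b)
      = qbinom ↑(a + c) a * qbinom ↑(a + b + c) b := by
  rw [qbinom_natCast (by omega), qbinom_natCast (by omega), qbinom_natCast (by omega),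
    qbinom_natCast (by omega), Nat.add_sub_cancel_left, Nat.add_sub_cancel_left,
    Nat.add_sub_cancel_left, show a + b + c - b = a + c by omega]
  have := qfact_ne_zero a
  have := qfact_ne_zero b
  have := qfact_ne_zero c
  have := qfact_ne_zero (a + b)
  have := qfact_ne_zero (a + c)
  field_simp

lemma q_pow_mul_qint_mul_qint_add (a b c : ℕ) :
    q ^ a * qint b * qint c + qint a * qint (a + b + c) = qint (a + c) * qint (a + b) := by
  simp only [qint_eq_div]
  have := q_sub_one_ne_zero
  field_simp
  ring

lemma qbinom_identity (a b c : ℕ) (hab : a + b ≠ 0) :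
    q ^ a * qbinom ((a : ℤ) + b - 1) a * qbinom ((a : ℤ) + b + c - 1) ((a : ℤ) + b)
      + qbinom ((a : ℤ) + b - 1) ((a : ℤ) - 1) * qbinom ((a : ℤ) + b + c) ((a : ℤ) + b)
    = qbinom ((a : ℤ) + c) a * qbinom ((a : ℤ) + b + c - 1) b := by
  have h₁ := qint_mul_qbinom_sub_one (a + b) a
  have h₂ := qint_mul_qbinom_sub_one_sub_one (a + b) a
  have h₃ := qint_mul_qbinom_sub_one (a + b + c) (a + b)
  have h₄ := qint_mul_qbinom_sub_one (a + b + c) b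
  have trinomial := qbinom_mul_qbinom a b c
  rw [Nat.add_sub_cancel_left] at h₁
  rw [Nat.add_sub_cancel_left] at h₃
  rw [show a + b + c - b = a + c by omega] at h₄
  push_cast at h₁ h₂ h₃ h₄ trinomial
  have hqab : qint (a + b) ≠ 0 := qint_ne_zero hab
  have hqabc : qint (a + b + c) ≠ 0 := qint_ne_zero (by omega)
  refine mul_right_cancel₀ (mul_ne_zero hqab hqabc) ?_
  linear_combination
    q ^ a * qint (a + b + c) * qbinom ((a : ℤ) + b + c - 1) ((a : ℤ) + b) * h₁
      + q ^ a * qint b * qbinom ((a : ℤ) + b) a * h₃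
      + qbinom ((a : ℤ) + b + c) ((a : ℤ) + b) * qint (a + b + c) * h₂
      + qbinom ((a : ℤ) + b) a * qbinom ((a : ℤ) + b + c) ((a : ℤ) + b)
        * q_pow_mul_qint_mul_qint_add a b c
      - qbinom ((a : ℤ) + c) a * qint (a + b) * h₄
      + qint (a + c) * qint (a + b) * trinomial

/-- For `h ≥ 1` and `k, s ≥ 0`,
`q^s C_q(h-1,s) C_q(h+k-s-1,h) + C_q(h-1,s-1) C_q(h+k-s,h) = C_q(k,s) C_q(h+k-s-1,h-s)`. -/
theorem stmt0 (h k s : ℕ) (hh : 1 ≤ h) :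
    q ^ s * qbinom ((h : ℤ) - 1) (s : ℤ) * qbinom ((h : ℤ) + (k : ℤ) - (s : ℤ) - 1) (h : ℤ)
      + qbinom ((h : ℤ) - 1) ((s : ℤ) - 1) * qbinom ((h : ℤ) + (k : ℤ) - (s : ℤ)) (h : ℤ)
    = qbinom (k : ℤ) (s : ℤ) * qbinom ((h : ℤ) + (k : ℤ) - (s : ℤ) - 1) ((h : ℤ) - (s : ℤ)) := by
  rcases lt_or_ge k s with hks | hsk
  · rw [qbinom_eq_zero_of_lt (by omega : (h : ℤ) + k - s - 1 < h),
      qbinom_eq_zero_of_lt (by omega : (h : ℤ) + k - s < h),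
      qbinom_eq_zero_of_lt (by omega : (k : ℤ) < s)]
    ring
  rcases lt_or_ge h s with hhs | hsh
  · rw [qbinom_eq_zero_of_lt (by omega : (h : ℤ) - 1 < s),
      qbinom_eq_zero_of_lt (by omega : (h : ℤ) - 1 < s - 1),
      qbinom_eq_zero_of_neg (by omega : (h : ℤ) - s < 0)]
    ring
  obtain ⟨b, rfl⟩ := Nat.exists_eq_add_of_le hsh
  obtain ⟨c, rfl⟩ := Nat.exists_eq_add_of_le hsk
  push_cast
  convert qbinom_identity s b c (by omega) using 4 <;> ring
end

section
/- For integers a ≥ 0, i ≥ 1, s ≥ 0: the sum over r from 1 to i of C_q(i-1, r-1) · C_q(r+s+a-1, s-1) · q^{binom(r,2)+r-i·r} · (-1)^{i-r} equals q^{binom(i,2)+(i-1)·a} · C_q(s+a, i+a), where C_q denotes the Gaussian binomial coefficient and binom(n,2) = n(n-1)/2. -/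
open Finset

/-!
Put `m = i - 1`, `N = m + s + a`, `k = s - 1`. Substituting `j = i - r` and using the symmetry
`C_q(n, k) = C_q(n, n - k)` turns the left side into
`q^{-binom(i,2)} ∑_{j=0}^{m} (-1)^j q^{binom(j,2)} C_q(m, j) C_q(N - j, k)`.
This alternating sum equals `q^{m(N-k)} C_q(N - m, k - m)` for every `N ≥ m`, by induction on `m`:
split `C_q(m+1, j)` by one Pascal rule, shift the index in one half, and recombine the two halves
with the other Pascal rule, which lowers `N` and `k` by one. Symmetry once more turns
`C_q(s + a, s - 1 - m)` into `C_q(s + a, i + a)`.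
-/

lemma q_ne_zero : q ≠ 0 := RatFunc.X_ne_zero

lemma qint_add (a b : ℕ) : qint (a + b) = qint a + q ^ a * qint b := by
  simp only [qint, sum_range_add, mul_sum, pow_add]

lemma qfact_zero : qfact 0 = 1 := rfl

lemma qbinom_zero_right {n : ℤ} (hn : 0 ≤ n) : qbinom n 0 = 1 := by
  lift n to ℕ using hn
  rw [← Nat.cast_zero, qbinom_natCast n.zero_le, Nat.sub_zero, qfact_zero, one_mul,
    div_self (qfact_ne_zero n)]

lemma qbinom_self {n : ℤ} (hn : 0 ≤ n) : qbinom n n = 1 := by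
  lift n to ℕ using hn
  rw [qbinom_natCast le_rfl, Nat.sub_self, qfact_zero, mul_one, div_self (qfact_ne_zero n)]

lemma qbinom_symm {n : ℤ} (hn : 0 ≤ n) (k : ℤ) : qbinom n (n - k) = qbinom n k := by
  lift n to ℕ using hn
  by_cases hk : 0 ≤ k ∧ k ≤ n
  · lift k to ℕ using hk.1
    have hkn : k ≤ n := by exact_mod_cast hk.2
    rw [← Nat.cast_sub hkn, qbinom_natCast (n.sub_le k), qbinom_natCast hkn,
      Nat.sub_sub_self hkn, mul_comm]
  · rcases not_and_or.mp hk with hk | hk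
    · rw [qbinom_eq_zero_of_lt (by omega), qbinom_eq_zero_of_neg (by omega)]
    · rw [qbinom_eq_zero_of_neg (by omega), qbinom_eq_zero_of_lt (by omega)]

lemma qbinom_natCast_succ_succ {n k : ℕ} (hkn : k < n) :
    qbinom (n + 1 : ℕ) (k + 1 : ℕ) = qbinom n k + q ^ (k + 1) * qbinom n (k + 1 : ℕ) := by
  obtain ⟨c, rfl⟩ := Nat.exists_eq_add_of_lt hkn
  rw [qbinom_natCast (by omega), qbinom_natCast (by omega), qbinom_natCast (by omega),
    show k + c + 1 + 1 - (k + 1) = c + 1 by omega, show k + c + 1 - k = c + 1 by omega,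
    show k + c + 1 - (k + 1) = c by omega, qfact_succ (k + c + 1),
    show k + c + 1 + 1 = (k + 1) + (c + 1) by omega, qint_add, qfact_succ k, qfact_succ c]
  have := qfact_ne_zero k
  have := qfact_ne_zero c
  have := qint_ne_zero k.succ_ne_zero
  have := qint_ne_zero c.succ_ne_zero
  field_simp

lemma qbinom_succ_left {n : ℤ} (hn : 0 ≤ n) (k : ℤ) :
    qbinom (n + 1) k = qbinom n (k - 1) + q ^ k * qbinom n k := by
  rcases lt_or_ge k 0 with hk | hk
  · rw [qbinom_eq_zero_of_neg hk, qbinom_eq_zero_of_neg hk, qbinom_eq_zero_of_neg (by omega)]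
    ring
  rcases eq_or_lt_of_le hk with rfl | hk
  · rw [qbinom_zero_right (by omega), qbinom_zero_right hn, qbinom_eq_zero_of_neg (by omega),
      zpow_zero]
    ring
  rcases lt_trichotomy k (n + 1) with hkn | rfl | hnk
  · lift n to ℕ using hn
    obtain ⟨k, rfl⟩ : ∃ k' : ℕ, k = k' + 1 := ⟨(k - 1).toNat, by omega⟩
    have h := qbinom_natCast_succ_succ (n := n) (k := k) (by omega)
    rw [← zpow_natCast] at h
    push_cast at h ⊢
    rwa [add_sub_cancel_right]
  · rw [qbinom_self (by omega), add_sub_cancel_right, qbinom_self hn,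
      qbinom_eq_zero_of_lt (by omega)]
    ring
  · rw [qbinom_eq_zero_of_lt hnk, qbinom_eq_zero_of_lt (by omega), qbinom_eq_zero_of_lt (by omega)]
    ring

lemma qbinom_succ_left' {n : ℤ} (hn : 0 ≤ n) (k : ℤ) :
    qbinom (n + 1) k = qbinom n k + q ^ (n + 1 - k) * qbinom n (k - 1) := by
  rw [← qbinom_symm (by omega) k, qbinom_succ_left hn, ← qbinom_symm hn k,
    ← qbinom_symm hn (k - 1), show n + 1 - k - 1 = n - k by ring,
    show n - (k - 1) = n + 1 - k by ring]

lemma choose_two_succ (j : ℕ) : (j + 1).choose 2 = j.choose 2 + j := by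
  rw [Nat.choose_succ_succ', Nat.choose_one_right, add_comm]

lemma two_mul_choose_two (n : ℕ) : 2 * (n.choose 2 : ℤ) = n * (n - 1) := by
  qify
  rw [Nat.cast_choose_two]
  ring

lemma natCast_mul_sub_one_ediv_two (n : ℕ) : (n : ℤ) * (n - 1) / 2 = n.choose 2 :=
  Int.ediv_eq_of_eq_mul_left two_ne_zero (by rw [← two_mul_choose_two]; ring)

lemma choose_two_sub_add_sub_mul {n j : ℕ} (hjn : j ≤ n) :
    ((n - j).choose 2 : ℤ) + ↑(n - j) - n * ↑(n - j) = -(n.choose 2 : ℤ) + j.choose 2 := by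
  have hcnj := two_mul_choose_two (n - j)
  have hcn := two_mul_choose_two n
  have hcj := two_mul_choose_two j
  push_cast [Nat.cast_sub hjn] at hcnj ⊢
  refine mul_left_cancel₀ (two_ne_zero (α := ℤ)) ?_
  linear_combination hcnj + hcn - hcj

theorem sum_alternating_qbinom_mul_qbinom (m : ℕ) {N : ℤ} (hN : (m : ℤ) ≤ N) (k : ℤ) :
    ∑ j ∈ range (m + 1), (-1) ^ j * q ^ j.choose 2 * qbinom m j * qbinom (N - j) k
      = q ^ ((m : ℤ) * (N - k)) * qbinom (N - m) (k - m) := by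
  induction m generalizing N k with
  | zero => simp [qbinom_self le_rfl]
  | succ m ih =>
    have hpascal (j : ℕ) :
        (-1) ^ j * q ^ j.choose 2 * qbinom ↑(m + 1) j * qbinom (N - j) k
          = (-1) ^ j * q ^ j.choose 2 * qbinom m (j - 1) * qbinom (N - j) k
            + (-1) ^ j * q ^ (j + 1).choose 2 * qbinom m j * qbinom (N - j) k := by
      rw [Nat.cast_add_one, qbinom_succ_left (Nat.cast_nonneg m), zpow_natCast, choose_two_succ,
        pow_add]
      ring
    have hrecombine : ∀ j ∈ range (m + 1),
        (-1) ^ (j + 1) * q ^ (j + 1).choose 2 * qbinom m (↑(j + 1) - 1)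
              * qbinom (N - ↑(j + 1)) k
            + (-1) ^ j * q ^ (j + 1).choose 2 * qbinom m j * qbinom (N - j) k
          = q ^ (N - k)
            * ((-1) ^ j * q ^ j.choose 2 * qbinom m j * qbinom (N - 1 - j) (k - 1)) := by
      intro j hjm
      have hj : (j : ℤ) ≤ m := by have := mem_range.mp hjm; omega
      have hsplit := qbinom_succ_left' (n := N - 1 - j) (by omega) k
      rw [show N - 1 - j + 1 = N - j by ring] at hsplit
      have hpow : q ^ j * q ^ (N - j - k) = q ^ (N - k) := by
        rw [← zpow_natCast, ← zpow_add₀ q_ne_zero]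
        ring_nf
      rw [Nat.cast_add_one, add_sub_cancel_right, show N - (j + 1) = N - 1 - j by ring, hsplit,
        choose_two_succ, pow_add, pow_succ]
      linear_combination
        ((-1) ^ j * q ^ j.choose 2 * qbinom m j * qbinom (N - 1 - j) (k - 1)) * hpow
    rw [sum_congr rfl fun j _ => hpascal j, sum_add_distrib, sum_range_succ',
      sum_range_succ (fun j => (-1) ^ j * q ^ (j + 1).choose 2 * qbinom m j * qbinom (N - j) k),
      Nat.cast_zero, zero_sub, qbinom_eq_zero_of_neg (by norm_num),
      qbinom_eq_zero_of_lt (n := m) (k := ↑(m + 1)) (by omega)]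
    simp only [mul_zero, zero_mul, add_zero, ← sum_add_distrib]
    rw [sum_congr rfl hrecombine, ← mul_sum, ih (by omega), ← mul_assoc, ← zpow_add₀ q_ne_zero]
    congr 2 <;> push_cast <;> ring

lemma sum_Icc_one_eq_sum_range_sub {M : Type*} [AddCommMonoid M] (f : ℕ → M) (n : ℕ) :
    ∑ r ∈ Icc 1 n, f r = ∑ j ∈ range n, f (n - j) := by
  refine sum_nbij' (n - ·) (n - ·) (fun r hr => ?_) (fun j hj => ?_) (fun r hr => ?_)
    (fun j hj => ?_) (fun r hr => congrArg f ?_) <;> simp only [mem_Icc, mem_range] at * <;>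
    omega

/-- For `a ≥ 0`, `i ≥ 1`, `s ≥ 0`:
`∑_{r=1}^{i} C_q(i-1,r-1) C_q(r+s+a-1,s-1) q^{binom(r,2)+r-ir} (-1)^{i-r}
  = q^{binom(i,2)+(i-1)a} C_q(s+a, i+a)`. -/
theorem stmt1 (a s i : ℕ) (hi : 1 ≤ i) :
    ∑ r ∈ Finset.Icc 1 i,
      qbinom ((i : ℤ) - 1) ((r : ℤ) - 1) * qbinom ((r : ℤ) + s + a - 1) ((s : ℤ) - 1)
        * q ^ (((r : ℤ) * ((r : ℤ) - 1)) / 2 + (r : ℤ) - (i : ℤ) * (r : ℤ))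
        * (-1 : RatFunc ℚ) ^ (i - r)
    = q ^ (((i : ℤ) * ((i : ℤ) - 1)) / 2 + ((i : ℤ) - 1) * (a : ℤ))
        * qbinom ((s : ℤ) + (a : ℤ)) ((i : ℤ) + (a : ℤ)) := by
  obtain ⟨m, rfl⟩ := Nat.exists_eq_add_of_le' hi
  calc _ = ∑ j ∈ range (m + 1), q ^ (-((m + 1).choose 2 : ℤ))
          * ((-1) ^ j * q ^ j.choose 2 * qbinom m j * qbinom (↑(m + s + a) - j) (s - 1)) := by
        rw [sum_Icc_one_eq_sum_range_sub]
        refine sum_congr rfl fun j hj => ?_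
        have hjm : j ≤ m := Nat.lt_succ_iff.mp (mem_range.mp hj)
        rw [natCast_mul_sub_one_ediv_two, choose_two_sub_add_sub_mul (by omega),
          zpow_add₀ q_ne_zero, zpow_natCast, Nat.sub_sub_self (by omega),
          show ((m + 1 : ℕ) : ℤ) - 1 = m by push_cast; ring,
          show ((m + 1 - j : ℕ) : ℤ) - 1 = m - j by omega, qbinom_symm (Nat.cast_nonneg m),
          show ((m + 1 - j : ℕ) : ℤ) + s + a - 1 = ((m + s + a : ℕ) : ℤ) - j by omega]
        ring
    _ = _ := by
        rw [← mul_sum, sum_alternating_qbinom_mul_qbinom m (by omega), ← mul_assoc,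
          ← zpow_add₀ q_ne_zero, show ((m + s + a : ℕ) : ℤ) - m = s + a by push_cast; ring,
          show (s : ℤ) - 1 - m = s + a - (↑(m + 1) + a) by push_cast; ring,
          qbinom_symm (by positivity), natCast_mul_sub_one_ediv_two]
        have hcm := two_mul_choose_two (m + 1)
        push_cast at hcm ⊢
        congr 2
        linear_combination -hcm
end
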